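/- Let P be a substochastic matrix on a finite set X with spectral radius < 1, G a finite group, π a unitary representation of G of dimension n, and A: oriented edges → G with A(−e) = A(e)^{−1}. Then the spectral radius of the extended matrix P^{A,π} (defined by [P^{A,π}]^{x,i}_{y,j} = P^x_y [π(A(x,y))]^i_j) is at most the spectral radius of P; in particular I − P^{A,π} is invertible. -/

import Mathlib

/-- The extended transition matrix P^{A,π} on X × {1,…,m}, with entries
P^x_y·[π(A(x,y))]^i_j. -/
noncomputable def extendedMatrix {X : Type*} [Fintype X] (P : Matrix X X ℝ)
    {G : Type*} [Group G] (A : X → X → G) {m : ℕ}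
    (π : G →* Matrix.unitaryGroup (Fin m) ℂ) :
    Matrix (X × Fin m) (X × Fin m) ℂ :=
  fun p q => (P p.1 q.1 : ℂ) * (π (A p.1 q.1) : Matrix (Fin m) (Fin m) ℂ) p.2 q.2

/-!
If `P^{A,π} v = μ v` with `v ≠ 0`, let `w x` be the ℓ² norm of the block `v (x, ·)`. Every block
of `P^{A,π}` is `P x y` times a unitary matrix, so the triangle inequality gives `‖μ‖ w ≤ P w`
entrywise, with `w ≥ 0` and `w ≠ 0`. Since `P ≥ 0` this iterates to `‖μ‖ᵏ w ≤ Pᵏ w`, whence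
`‖μ‖ᵏ ≤ ‖Pᵏ‖` for the ℓ∞ operator norm, and Gelfand's formula gives `‖μ‖ ≤ ρ(P)`. As `ρ(P) < 1`,
`1` is not in the spectrum of `P^{A,π}`.
-/

open Matrix WithLp
open scoped NNReal ENNReal

attribute [local instance] Matrix.linftyOpNormedAddCommGroup Matrix.linftyOpNormedRing
  Matrix.linftyOpNormedAlgebra

theorem le_spectralRadius_of_forall_pow_le_nnnorm_pow {A : Type*} [NormedRing A]
    [NormedAlgebra ℂ A] [CompleteSpace A] (a : A) {r : ℝ≥0} (h : ∀ n, r ^ n ≤ ‖a ^ n‖₊) :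
    (r : ℝ≥0∞) ≤ spectralRadius ℂ a := by
  refine ge_of_tendsto (spectrum.pow_nnnorm_pow_one_div_tendsto_nhds_spectralRadius a) ?_
  filter_upwards [Filter.eventually_ne_atTop 0] with n hn
  calc (r : ℝ≥0∞) = ((r : ℝ≥0∞) ^ n) ^ (1 / n : ℝ) := by
        rw [one_div, ENNReal.pow_rpow_inv_natCast hn]
    _ ≤ (‖a ^ n‖₊ : ℝ≥0∞) ^ (1 / n : ℝ) := by gcongr; exact_mod_cast h n

namespace Matrix

section Nonneg

variable {X : Type*} [Fintype X] {P : Matrix X X ℝ}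

theorem mulVec_mono_of_nonneg (hP : ∀ x y, 0 ≤ P x y) : Monotone (P *ᵥ ·) :=
  fun _ _ huv x => Finset.sum_le_sum fun y _ => mul_le_mul_of_nonneg_left (huv y) (hP x y)

theorem pow_smul_le_pow_mulVec [DecidableEq X] (hP : ∀ x y, 0 ≤ P x y) {r : ℝ} (hr : 0 ≤ r)
    {w : X → ℝ} (h : r • w ≤ P *ᵥ w) (k : ℕ) : r ^ k • w ≤ (P ^ k) *ᵥ w := by
  induction k with
  | zero => simp
  | succ k ih =>
    calc r ^ (k + 1) • w = r ^ k • (r • w) := by rw [pow_succ, mul_smul]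
      _ ≤ r ^ k • (P *ᵥ w) := smul_le_smul_of_nonneg_left h (pow_nonneg hr k)
      _ = P *ᵥ (r ^ k • w) := (mulVec_smul P _ w).symm
      _ ≤ P *ᵥ ((P ^ k) *ᵥ w) := mulVec_mono_of_nonneg hP ih
      _ = (P ^ (k + 1)) *ᵥ w := by rw [mulVec_mulVec, pow_succ']

theorem pow_le_linfty_opNNNorm_pow [DecidableEq X] (hP : ∀ x y, 0 ≤ P x y) {w : X → ℝ}
    (hw : 0 ≤ w) (hw0 : w ≠ 0) {r : ℝ≥0} (h : (r : ℝ) • w ≤ P *ᵥ w) (k : ℕ) :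
    r ^ k ≤ ‖P ^ k‖₊ := by
  have hk := pow_smul_le_pow_mulVec hP r.2 h k
  have hnorm : ‖(r : ℝ) ^ k • w‖ ≤ ‖(P ^ k) *ᵥ w‖ :=
    (pi_norm_le_iff_of_nonneg (norm_nonneg _)).mpr fun x =>
      calc ‖((r : ℝ) ^ k • w) x‖ = ((r : ℝ) ^ k • w) x :=
            Real.norm_of_nonneg (mul_nonneg (by positivity) (hw x))
        _ ≤ ((P ^ k) *ᵥ w) x := hk x
        _ ≤ ‖(P ^ k) *ᵥ w‖ := (Real.le_norm_self _).trans (norm_le_pi_norm _ x)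
  rw [← NNReal.coe_le_coe, NNReal.coe_pow, coe_nnnorm]
  refine le_of_mul_le_mul_right ?_ (norm_pos_iff.mpr hw0)
  calc (r : ℝ) ^ k * ‖w‖ = ‖(r : ℝ) ^ k • w‖ := by rw [norm_smul, norm_pow, NNReal.norm_eq]
    _ ≤ ‖(P ^ k) *ᵥ w‖ := hnorm
    _ ≤ ‖P ^ k‖ * ‖w‖ := linfty_opNorm_mulVec _ _

theorem linfty_opNNNorm_map_ofReal {Y : Type*} [Fintype Y] (M : Matrix X Y ℝ) :
    ‖M.map Complex.ofReal‖₊ = ‖M‖₊ := by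
  simp [linfty_opNNNorm_def]

/-- A Collatz–Wielandt lower bound for the spectral radius of a nonnegative matrix. -/
theorem le_spectralRadius_of_smul_le_mulVec [DecidableEq X] (hP : ∀ x y, 0 ≤ P x y)
    {w : X → ℝ} (hw : 0 ≤ w) (hw0 : w ≠ 0) {r : ℝ≥0} (h : (r : ℝ) • w ≤ P *ᵥ w) :
    (r : ℝ≥0∞) ≤ spectralRadius ℂ (P.map Complex.ofReal) := by
  have : CompleteSpace (Matrix X X ℂ) := FiniteDimensional.complete ℂ _
  refine le_spectralRadius_of_forall_pow_le_nnnorm_pow _ fun k => ?_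
  have hpow : P.map Complex.ofReal ^ k = (P ^ k).map Complex.ofReal :=
    (map_pow Complex.ofRealHom.mapMatrix P k).symm
  rw [hpow, linfty_opNNNorm_map_ofReal]
  exact pow_le_linfty_opNNNorm_pow hP hw hw0 h k

end Nonneg

theorem UnitaryGroup.norm_toLp_mulVec {n 𝕜 : Type*} [Fintype n] [DecidableEq n] [RCLike 𝕜]
    (U : unitaryGroup n 𝕜) (x : n → 𝕜) :
    ‖toLp 2 ((U : Matrix n n 𝕜) *ᵥ x)‖ = ‖toLp 2 x‖ := by
  rw [← toEuclideanCLM_toLp]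
  exact ContinuousLinearMap.norm_map_of_mem_unitary (Unitary.map_mem _ U.2) _

end Matrix

section BlockNorms

variable {X ι 𝕜 : Type*} [Fintype ι] [RCLike 𝕜]

noncomputable def blockNorms (v : X × ι → 𝕜) (x : X) : ℝ :=
  ‖toLp 2 (Function.curry v x)‖

theorem blockNorms_nonneg (v : X × ι → 𝕜) : 0 ≤ blockNorms v :=
  fun _ => norm_nonneg _

theorem blockNorms_smul (c : 𝕜) (v : X × ι → 𝕜) : blockNorms (c • v) = ‖c‖ • blockNorms v := by
  ext x
  exact norm_smul c (toLp 2 (Function.curry v x))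

theorem blockNorms_ne_zero {v : X × ι → 𝕜} (hv : v ≠ 0) : blockNorms v ≠ 0 := by
  contrapose! hv
  ext ⟨x, i⟩
  have hx : toLp 2 (Function.curry v x) = 0 := norm_eq_zero.mp (congrFun hv x)
  exact congrFun (congrArg ofLp hx) i

end BlockNorms

section Extended

variable {X : Type*} [Fintype X] (P : Matrix X X ℝ) {G : Type*} [Group G] (A : X → X → G)
  {m : ℕ} (π : G →* Matrix.unitaryGroup (Fin m) ℂ)

theorem curry_extendedMatrix_mulVec (v : X × Fin m → ℂ) (x : X) :
    Function.curry (extendedMatrix P A π *ᵥ v) x =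
      ∑ y, (P x y : ℂ) • ((π (A x y) : Matrix (Fin m) (Fin m) ℂ) *ᵥ Function.curry v y) := by
  ext i
  simp only [Function.curry_apply, mulVec, dotProduct, extendedMatrix, Fintype.sum_prod_type,
    Finset.sum_apply, Pi.smul_apply, smul_eq_mul, Finset.mul_sum, mul_assoc]

theorem blockNorms_extendedMatrix_mulVec_le (hP : ∀ x y, 0 ≤ P x y) (v : X × Fin m → ℂ) :
    blockNorms (extendedMatrix P A π *ᵥ v) ≤ P *ᵥ blockNorms v := fun x => by
  rw [blockNorms, curry_extendedMatrix_mulVec, toLp_sum]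
  refine (norm_sum_le _ _).trans_eq (Finset.sum_congr rfl fun y _ => ?_)
  rw [toLp_smul, norm_smul, Complex.norm_real, Real.norm_of_nonneg (hP x y),
    UnitaryGroup.norm_toLp_mulVec]
  rfl

theorem spectralRadius_extendedMatrix_le [DecidableEq X] (hP : ∀ x y, 0 ≤ P x y) :
    spectralRadius ℂ (extendedMatrix P A π) ≤ spectralRadius ℂ (P.map Complex.ofReal) := by
  refine iSup₂_le fun μ hμ => ?_
  have hμ' : Module.End.HasEigenvalue (toLin' (extendedMatrix P A π)) μ := by
    rwa [Module.End.hasEigenvalue_iff_mem_spectrum, spectrum_toLin']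
  obtain ⟨v, hv⟩ := hμ'.exists_hasEigenvector
  refine le_spectralRadius_of_smul_le_mulVec hP (blockNorms_nonneg v) (blockNorms_ne_zero hv.2) ?_
  calc ((‖μ‖₊ : ℝ≥0) : ℝ) • blockNorms v = blockNorms (extendedMatrix P A π *ᵥ v) := by
        rw [← toLin'_apply, hv.apply_eq_smul, blockNorms_smul, coe_nnnorm]
    _ ≤ P *ᵥ blockNorms v := blockNorms_extendedMatrix_mulVec_le P A π hP v

end Extended

theorem stmt_12_general {X : Type*} [Fintype X] [DecidableEq X] (P : Matrix X X ℝ)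
    (hnonneg : ∀ x y, 0 ≤ P x y)
    (hspec : spectralRadius ℂ (P.map (Complex.ofReal)) < 1)
    {G : Type*} [Group G] (m : ℕ)
    (π : G →* Matrix.unitaryGroup (Fin m) ℂ)
    (A : X → X → G) :
    spectralRadius ℂ (extendedMatrix P A π) ≤ spectralRadius ℂ (P.map (Complex.ofReal)) ∧
    IsUnit (1 - extendedMatrix P A π) := by
  have hρ := spectralRadius_extendedMatrix_le P A π hnonneg
  refine ⟨hρ, ?_⟩
  have h1 : (1 : ℂ) ∈ resolventSet ℂ (extendedMatrix P A π) :=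
    spectrum.mem_resolventSet_of_spectralRadius_lt (by simpa using hρ.trans_lt hspec)
  simpa [spectrum.mem_resolventSet_iff] using h1

/-- for a nonnegative substochastic P with spectral radius < 1 and a
unitary representation π of a finite group G, the spectral radius of the extended matrix
P^{A,π} is at most the spectral radius of P; in particular I − P^{A,π} is invertible. -/
theorem stmt_12 {X : Type*} [Fintype X] [DecidableEq X] [Nonempty X] (P : Matrix X X ℝ)
    (hnonneg : ∀ x y, 0 ≤ P x y) (hsub : ∀ x, ∑ y, P x y ≤ 1)
    (hspec : spectralRadius ℂ (P.map (Complex.ofReal)) < 1)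
    {G : Type*} [Group G] [Finite G] (m : ℕ) (hm : 1 ≤ m)
    (π : G →* Matrix.unitaryGroup (Fin m) ℂ)
    (A : X → X → G) (hA : ∀ x y : X, A y x = (A x y)⁻¹) :
    spectralRadius ℂ (extendedMatrix P A π) ≤ spectralRadius ℂ (P.map (Complex.ofReal)) ∧
    IsUnit (1 - extendedMatrix P A π) :=
  stmt_12_general P hnonneg hspec m π A
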